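/- arXiv:1708.08436 — 4 statements merged into one kernel-verified Lean document; each statement's English description precedes it below -/
import Mathlib

section
/- Let D, w, W, W^{1/2}, L, L⁺, Π be as in the context, let ε ≥ 0, and let S : Fin m → ℝ satisfy S f ≥ 0 for all f, with S̄ the m × m diagonal matrix with diagonal entries S. If the ℓ²-operator norm of Π * S̄ * Π − Π is at most ε, then (1−ε)·L ⪯ Dᵀ * W^{1/2} * S̄ * W^{1/2} * D ⪯ (1+ε)·L (i.e. the up Laplacian with reweighted weights f ↦ w f · S f is sandwiched between (1−ε)·L and (1+ε)·L in the positive-semidefinite order). -/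
open Matrix

/-! With `B = W^{1/2} D` we have `L = BᵀB` and `Π = B L⁺ Bᵀ`. Since `ker (BᵀB) = ker B`, the
identity `L L⁺ L = L` gives `Π B = B` and `Bᵀ Π = Bᵀ`, hence `Bᵀ (Π S̄ Π − Π) B = Bᵀ S̄ B − L`.
So for `y = B x` the quadratic form of `Bᵀ S̄ B − L` at `x` is `yᵀ (Π S̄ Π − Π) y`, which by
Cauchy–Schwarz and the norm bound is at most `ε ‖y‖² = ε xᵀ L x` in absolute value. -/

theorem LinearMap.norm_apply_le_of_norm_eq_one {E F : Type*} [NormedAddCommGroup E]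
    [NormedSpace ℝ E] [SeminormedAddCommGroup F] [NormedSpace ℝ F] (f : E →ₗ[ℝ] F) {ε : ℝ}
    (hf : ∀ x, ‖x‖ = 1 → ‖f x‖ ≤ ε) (x : E) : ‖f x‖ ≤ ε * ‖x‖ := by
  rcases eq_or_ne x 0 with rfl | hx
  · simp
  have hx' : 0 < ‖x‖ := norm_pos_iff.mpr hx
  have := hf (‖x‖⁻¹ • x) (norm_smul_inv_norm hx)
  rw [map_smul, norm_smul, norm_inv, norm_norm, inv_mul_le_iff₀ hx'] at this
  linarith

theorem LinearMap.abs_inner_apply_self_le_of_norm_eq_one {E : Type*} [NormedAddCommGroup E]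
    [InnerProductSpace ℝ E] (f : E →ₗ[ℝ] E) {ε : ℝ}
    (hf : ∀ x, ‖x‖ = 1 → ‖f x‖ ≤ ε) (x : E) : |inner ℝ x (f x)| ≤ ε * ‖x‖ ^ 2 :=
  calc |inner ℝ x (f x)| ≤ ‖x‖ * ‖f x‖ := abs_real_inner_le_norm _ _
    _ ≤ ‖x‖ * (ε * ‖x‖) := by gcongr; exact f.norm_apply_le_of_norm_eq_one hf x
    _ = ε * ‖x‖ ^ 2 := by ring

namespace Matrix

variable {ι : Type*} [Fintype ι]

theorem abs_dotProduct_mulVec_le_of_sqrt_sum_sq [DecidableEq ι] (M : Matrix ι ι ℝ) {ε : ℝ}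
    (hM : ∀ x : ι → ℝ, √(∑ i, x i ^ 2) = 1 → √(∑ i, (M *ᵥ x) i ^ 2) ≤ ε) (y : ι → ℝ) :
    |y ⬝ᵥ M *ᵥ y| ≤ ε * (y ⬝ᵥ y) := by
  have hnorm : ∀ x : EuclideanSpace ℝ ι, ‖x‖ = √(∑ i, x i ^ 2) := fun x => by
    simp [EuclideanSpace.norm_eq]
  have := (toEuclideanLin M).abs_inner_apply_self_le_of_norm_eq_one
    (fun x hx => by rw [hnorm] at hx ⊢; exact hM _ hx) (WithLp.toLp 2 y)
  rw [toLpLin_toLp, EuclideanSpace.inner_toLp_toLp, star_trivial, dotProduct_comm,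
    EuclideanSpace.real_norm_sq_eq] at this
  simpa [dotProduct, sq] using this

variable {m n : Type*} [Fintype m] [Fintype n]

theorem dotProduct_transpose_mul_mul_mulVec (B : Matrix m n ℝ) (M : Matrix m m ℝ) (x : n → ℝ) :
    x ⬝ᵥ (Bᵀ * M * B) *ᵥ x = (B *ᵥ x) ⬝ᵥ M *ᵥ (B *ᵥ x) := by
  rw [← mulVec_mulVec, ← mulVec_mulVec, dotProduct_mulVec, vecMul_transpose]

theorem dotProduct_transpose_mul_self_mulVec (B : Matrix m n ℝ) (x : n → ℝ) :
    x ⬝ᵥ (Bᵀ * B) *ᵥ x = (B *ᵥ x) ⬝ᵥ (B *ᵥ x) := by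
  rw [← mulVec_mulVec, dotProduct_mulVec, vecMul_transpose]

theorem posSemidef_sandwich_of_abs_dotProduct_sub_mulVec_le {A L : Matrix n n ℝ}
    (hA : A.IsHermitian) (hL : L.IsHermitian) {ε : ℝ}
    (h : ∀ x, |x ⬝ᵥ (A - L) *ᵥ x| ≤ ε * (x ⬝ᵥ L *ᵥ x)) :
    (A - (1 - ε) • L).PosSemidef ∧ ((1 + ε) • L - A).PosSemidef := by
  have hcL (c : ℝ) : (c • L).IsHermitian := hL.smul (IsSelfAdjoint.all c)
  have hquad (x : n → ℝ) := abs_le.mp (h x)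
  simp only [sub_mulVec, dotProduct_sub] at hquad
  constructor
  · refine .of_dotProduct_mulVec_nonneg (hA.sub (hcL _)) fun x => ?_
    simp only [star_trivial, sub_mulVec, smul_mulVec, dotProduct_sub, dotProduct_smul, smul_eq_mul]
    linarith [hquad x]
  · refine .of_dotProduct_mulVec_nonneg ((hcL _).sub hA) fun x => ?_
    simp only [star_trivial, sub_mulVec, smul_mulVec, dotProduct_sub, dotProduct_smul, smul_eq_mul]
    linarith [hquad x]

variable [DecidableEq n]

theorem mul_eq_self_of_transpose_mul_mul_eq {B : Matrix m n ℝ} {X : Matrix n n ℝ}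
    (h : Bᵀ * B * X = Bᵀ * B) : B * X = B := by
  have hker : (B * (X - 1))ᴴ * (B * (X - 1)) = 0 := by
    rw [conjTranspose_eq_transpose_of_trivial, transpose_mul, Matrix.mul_assoc,
      ← Matrix.mul_assoc Bᵀ, Matrix.mul_sub, Matrix.mul_one, h, sub_self, Matrix.mul_zero]
  rwa [conjTranspose_mul_self_eq_zero, Matrix.mul_sub, Matrix.mul_one, sub_eq_zero] at hker

variable {B : Matrix m n ℝ} {Lp : Matrix n n ℝ}

theorem mul_mul_transpose_mul_self_eq (h : Bᵀ * B * Lp * (Bᵀ * B) = Bᵀ * B) :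
    B * Lp * (Bᵀ * B) = B := by
  rw [Matrix.mul_assoc]
  exact mul_eq_self_of_transpose_mul_mul_eq (by rw [← Matrix.mul_assoc, h])

theorem transpose_mul_self_mul_mul_transpose_eq (h : Bᵀ * B * Lp * (Bᵀ * B) = Bᵀ * B) :
    Bᵀ * B * Lp * Bᵀ = Bᵀ := by
  have hT : Bᵀ * B * (Lpᵀ * (Bᵀ * B)) = Bᵀ * B := by
    simpa [transpose_mul, Matrix.mul_assoc] using congrArg transpose h
  simpa [transpose_mul, Matrix.mul_assoc] using
    congrArg transpose (mul_eq_self_of_transpose_mul_mul_eq hT)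

theorem transpose_mul_mul_transpose_sub_mul_eq (h : Bᵀ * B * Lp * (Bᵀ * B) = Bᵀ * B)
    (S : Matrix m m ℝ) :
    Bᵀ * (B * Lp * Bᵀ * S * (B * Lp * Bᵀ) - B * Lp * Bᵀ) * B = Bᵀ * S * B - Bᵀ * B := by
  have hP : B * Lp * Bᵀ * B = B := by
    rw [Matrix.mul_assoc _ Bᵀ]; exact mul_mul_transpose_mul_self_eq h
  have hPt : Bᵀ * (B * Lp * Bᵀ) = Bᵀ := by
    simpa only [Matrix.mul_assoc] using transpose_mul_self_mul_mul_transpose_eq h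
  set P := B * Lp * Bᵀ
  calc Bᵀ * (P * S * P - P) * B = Bᵀ * P * S * (P * B) - Bᵀ * (P * B) := by
        simp only [Matrix.mul_sub, Matrix.sub_mul, Matrix.mul_assoc]
    _ = Bᵀ * S * B - Bᵀ * B := by rw [hP, hPt]

end Matrix

theorem sandwich_of_projection_perturbation_general (m n : ℕ)
    (D : Matrix (Fin m) (Fin n) ℝ) (w : Fin m → ℝ) (hw : ∀ f, 0 < w f)
    (W Whalf : Matrix (Fin m) (Fin m) ℝ)
    (hW : W = Matrix.diagonal w)
    (hWhalf : Whalf = Matrix.diagonal fun f => Real.sqrt (w f))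
    (L Lp : Matrix (Fin n) (Fin n) ℝ) (hL : L = Dᵀ * W * D)
    (h1 : L * Lp * L = L)
    (Pm : Matrix (Fin m) (Fin m) ℝ) (hPm : Pm = Whalf * D * Lp * Dᵀ * Whalf)
    (ε : ℝ)
    (S : Fin m → ℝ)
    -- the ℓ²-operator norm of `Π S̄ Π − Π` is at most `ε`:
    (hopnorm : ∀ x : Fin m → ℝ, Real.sqrt (∑ i, (x i) ^ 2) = 1 →
      Real.sqrt (∑ i, ((Pm * Matrix.diagonal S * Pm - Pm).mulVec x i) ^ 2) ≤ ε) :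
    (Dᵀ * Whalf * Matrix.diagonal S * Whalf * D - (1 - ε) • L).PosSemidef ∧
      ((1 + ε) • L - Dᵀ * Whalf * Matrix.diagonal S * Whalf * D).PosSemidef := by
  have hWW : Whalf * Whalf = W := by
    rw [hWhalf, hW, diagonal_mul_diagonal]
    simp only [Real.mul_self_sqrt (hw _).le]
  set B := Whalf * D
  have hBt : Bᵀ = Dᵀ * Whalf := by rw [transpose_mul, hWhalf, diagonal_transpose]
  have hLB : L = Bᵀ * B := by simp only [hL, hBt, B, ← hWW, Matrix.mul_assoc]
  have hPB : Pm = B * Lp * Bᵀ := by simp only [hPm, hBt, Matrix.mul_assoc]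
  have hA : Dᵀ * Whalf * diagonal S * Whalf * D = Bᵀ * diagonal S * B := by
    simp only [hBt, B, Matrix.mul_assoc]
  rw [hPB] at hopnorm
  rw [hLB] at h1
  rw [hLB, hA]
  refine posSemidef_sandwich_of_abs_dotProduct_sub_mulVec_le
    (by simpa using isHermitian_conjTranspose_mul_mul B (isHermitian_diagonal S))
    (by simpa using isHermitian_conjTranspose_mul_self B) fun x => ?_
  rw [← transpose_mul_mul_transpose_sub_mul_eq h1, dotProduct_transpose_mul_mul_mulVec,
    dotProduct_transpose_mul_self_mulVec]
  exact abs_dotProduct_mulVec_le_of_sqrt_sum_sq _ hopnorm _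

/-- If the ℓ²-operator norm of `Π S̄ Π − Π` is at most `ε`, then the
reweighted up Laplacian `Dᵀ W^{1/2} S̄ W^{1/2} D` is sandwiched between `(1−ε)·L` and
`(1+ε)·L` in the positive-semidefinite order. -/
theorem sandwich_of_projection_perturbation (m n : ℕ) (hn : 1 ≤ n)
    (D : Matrix (Fin m) (Fin n) ℝ) (w : Fin m → ℝ) (hw : ∀ f, 0 < w f)
    (W Whalf : Matrix (Fin m) (Fin m) ℝ)
    (hW : W = Matrix.diagonal w)
    (hWhalf : Whalf = Matrix.diagonal fun f => Real.sqrt (w f))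
    (L Lp : Matrix (Fin n) (Fin n) ℝ) (hL : L = Dᵀ * W * D)
    (h1 : L * Lp * L = L) (h2 : Lp * L * Lp = Lp)
    (h3 : (L * Lp)ᵀ = L * Lp) (h4 : (Lp * L)ᵀ = Lp * L)
    (Pm : Matrix (Fin m) (Fin m) ℝ) (hPm : Pm = Whalf * D * Lp * Dᵀ * Whalf)
    (ε : ℝ) (hε : 0 ≤ ε)
    (S : Fin m → ℝ) (hS : ∀ f, 0 ≤ S f)
    -- the ℓ²-operator norm of `Π S̄ Π − Π` is at most `ε`:
    (hopnorm : ∀ x : Fin m → ℝ, Real.sqrt (∑ i, (x i) ^ 2) = 1 →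
      Real.sqrt (∑ i, ((Pm * Matrix.diagonal S * Pm - Pm).mulVec x i) ^ 2) ≤ ε) :
    (Dᵀ * Whalf * Matrix.diagonal S * Whalf * D - (1 - ε) • L).PosSemidef ∧
      ((1 + ε) • L - Dᵀ * Whalf * Matrix.diagonal S * Whalf * D).PosSemidef :=
  sandwich_of_projection_perturbation_general m n D w hw W Whalf hW hWhalf L Lp hL h1 Pm hPm ε S
    hopnorm
end

section
/- With the notation of the context, the 1-dimensional up Laplacian of the 2-dimensional oriented simplicial complex satisfies L = (1/2)·Δ − A*, where A* is the oriented edge–edge affinity matrix and Δ is the diagonal degree matrix of the unoriented edge–edge affinity matrix A = |A*|. -/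
open Matrix

namespace EdgeLap

variable (n : ℕ)

/-- The signed incidence value between a finset `τ` and a sub-finset `σ` with one fewer
element: `(−1)^j` where `j` is the position (from 0) of the unique element of `τ \ σ` in
the increasing enumeration of `τ`; and `0` if `σ ⊄ τ`. -/
noncomputable def incSign (τ σ : Finset (Fin n)) : ℝ :=
  if σ ⊆ τ then ∑ x ∈ τ \ σ, (-1 : ℝ) ^ ((τ.filter fun y => y < x).card) else 0

/-- The (raw) entry of the triangle–edge incidence matrix `D₁`. -/
noncomputable def rawD (T : Finset (Finset (Fin n))) (f e : Finset (Fin n)) : ℝ :=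
  if f ∈ T then incSign n f e else 0

/-- The triangle–edge incidence matrix `D₁`, indexed by 3-element subsets (triangles)
and 2-element subsets (edges) of the vertex set. -/
noncomputable def D1 (T : Finset (Finset (Fin n))) :
    Matrix {f : Finset (Fin n) // f.card = 3} {e : Finset (Fin n) // e.card = 2} ℝ :=
  fun f e => rawD n T f.1 e.1

/-- The `1`-dimensional up Laplacian `L = D₁ᵀ W₂ D₁`. -/
noncomputable def upLap1 (T : Finset (Finset (Fin n))) (w : Finset (Fin n) → ℝ) :
    Matrix {e : Finset (Fin n) // e.card = 2} {e : Finset (Fin n) // e.card = 2} ℝ :=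
  (D1 n T)ᵀ *
    Matrix.diagonal (fun f : {f : Finset (Fin n) // f.card = 3} =>
      if f.1 ∈ T then w f.1 else 0) *
    D1 n T

/-- The oriented edge–edge affinity matrix `A*`. -/
noncomputable def orientedAffinity (T : Finset (Finset (Fin n)))
    (w : Finset (Fin n) → ℝ) :
    Matrix {e : Finset (Fin n) // e.card = 2} {e : Finset (Fin n) // e.card = 2} ℝ :=
  fun e e' =>
    if e ≠ e' ∧ e.1 ∪ e'.1 ∈ T then
      if rawD n T (e.1 ∪ e'.1) e.1 = rawD n T (e.1 ∪ e'.1) e'.1 then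
        -w (e.1 ∪ e'.1)
      else
        w (e.1 ∪ e'.1)
    else 0

/-- The diagonal degree matrix `Δ` of the unoriented affinity matrix `A = |A*|`. -/
noncomputable def degMat (T : Finset (Finset (Fin n))) (w : Finset (Fin n) → ℝ) :
    Matrix {e : Finset (Fin n) // e.card = 2} {e : Finset (Fin n) // e.card = 2} ℝ :=
  Matrix.diagonal (fun e => ∑ e', |orientedAffinity n T w e e'|)

end EdgeLap

open EdgeLap

lemma incSign_pm {n : ℕ} {τ σ : Finset (Fin n)} (h : σ ⊆ τ) (h1 : (τ \ σ).card = 1) :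
    incSign n τ σ = 1 ∨ incSign n τ σ = -1 := by
  obtain ⟨x, hx⟩ := Finset.card_eq_one.mp h1
  rw [incSign, if_pos h, hx, Finset.sum_singleton]
  rcases Nat.even_or_odd ((τ.filter fun y => y < x).card) with he | ho
  · exact Or.inl he.neg_one_pow
  · exact Or.inr ho.neg_one_pow

lemma edge_count {n : ℕ} {e f : Finset (Fin n)} (he : e.card = 2) (hf : f.card = 3)
    (hef : e ⊆ f) :
    (Finset.univ.filter fun e' : Finset (Fin n) =>
        e'.card = 2 ∧ (e ∪ e' = f ∧ e ≠ e')).card = 2 := by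
  classical
  have himg : (Finset.univ.filter fun e' : Finset (Fin n) =>
      e'.card = 2 ∧ (e ∪ e' = f ∧ e ≠ e')) = e.image f.erase := by
    ext e'
    simp only [Finset.mem_filter, Finset.mem_univ, true_and, Finset.mem_image]
    constructor
    · rintro ⟨hc, hu, hne⟩
      have hsub : e' ⊆ f := hu ▸ Finset.subset_union_right
      have hns : ¬ e ⊆ e' := fun hs => hne (Finset.eq_of_subset_of_card_le hs (by omega))
      obtain ⟨x, hxe, hxe'⟩ := Finset.not_subset.mp hns
      refine ⟨x, hxe, ?_⟩
      have h2 : (f.erase x).card = 2 := by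
        rw [Finset.card_erase_of_mem (hef hxe), hf]
      exact (Finset.eq_of_subset_of_card_le (Finset.subset_erase.mpr ⟨hsub, hxe'⟩)
        (by omega)).symm
    · rintro ⟨x, hxe, rfl⟩
      have hxf : x ∈ f := hef hxe
      have hcard : (f.erase x).card = 2 := by rw [Finset.card_erase_of_mem hxf, hf]
      refine ⟨hcard, ?_, ?_⟩
      · apply Finset.Subset.antisymm
        · exact Finset.union_subset hef (Finset.erase_subset x f)
        · intro y hy
          by_cases hyx : y = x
          · exact Finset.mem_union_left _ (hyx ▸ hxe)
          · exact Finset.mem_union_right _ (Finset.mem_erase.mpr ⟨hyx, hy⟩)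
      · have hss : e ⊂ f := hef.ssubset_of_ne (by intro h; rw [h, hf] at he; omega)
        obtain ⟨c, hcf, hce⟩ := Finset.exists_of_ssubset hss
        intro heq
        exact hce (heq ▸ Finset.mem_erase.mpr ⟨fun h => hce (h ▸ hxe), hcf⟩)
  rw [himg, Finset.card_image_of_injOn, he]
  intro x hx y hy hxy
  by_contra hne
  have : x ∈ f.erase y := Finset.mem_erase.mpr ⟨hne, hef hx⟩
  rw [← hxy] at this
  exact (Finset.mem_erase.mp this).1 rfl

/-- The 1-dimensional up Laplacian of a 2-dimensional oriented
simplicial complex satisfies `L = (1/2)·Δ − A*`. -/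
theorem upLap_eq_half_deg_sub_orientedAffinity (n : ℕ)
    (T : Finset (Finset (Fin n))) (hT : ∀ f ∈ T, f.card = 3)
    (w : Finset (Fin n) → ℝ) (hw : ∀ f ∈ T, 0 < w f) :
    upLap1 n T w = (1 / 2 : ℝ) • degMat n T w - orientedAffinity n T w := by
  classical
  funext e e'
  set S3 : Finset (Finset (Fin n)) := Finset.univ.filter (fun s => s.card = 3) with hS3
  set S2 : Finset (Finset (Fin n)) := Finset.univ.filter (fun s => s.card = 2) with hS2
  have hmem3 : ∀ s : Finset (Fin n), s ∈ S3 ↔ s.card = 3 := by simp [hS3]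
  have hmem2 : ∀ s : Finset (Fin n), s ∈ S2 ↔ s.card = 2 := by simp [hS2]
  -- Laplacian entry as a sum over triangles
  have hL : upLap1 n T w e e' = ∑ f ∈ S3,
      (if f ∈ T ∧ e.1 ⊆ f ∧ e'.1 ⊆ f then
        w f * (incSign n f e.1 * incSign n f e'.1) else 0) := by
    have h1 : upLap1 n T w e e' = ∑ f : {f : Finset (Fin n) // f.card = 3},
        rawD n T f.1 e.1 * ((if f.1 ∈ T then w f.1 else 0) * rawD n T f.1 e'.1) := by
      rw [upLap1, Matrix.mul_apply]
      refine Finset.sum_congr rfl (fun f _ => ?_)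
      rw [Matrix.mul_diagonal, Matrix.transpose_apply]
      simp only [D1]
      ring
    rw [h1, ← Finset.sum_subtype S3 hmem3
      (fun f => rawD n T f e.1 * ((if f ∈ T then w f else 0) * rawD n T f e'.1))]
    refine Finset.sum_congr rfl (fun f hf => ?_)
    by_cases hfT : f ∈ T
    · by_cases hse : e.1 ⊆ f
      · by_cases hse' : e'.1 ⊆ f
        · rw [if_pos (show f ∈ T ∧ e.1 ⊆ f ∧ e'.1 ⊆ f from ⟨hfT, hse, hse'⟩)]
          simp only [rawD, if_pos hfT]
          ring
        · have h0 : incSign n f e'.1 = 0 := if_neg hse'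
          simp [rawD, hfT, h0, hse']
      · have h0 : incSign n f e.1 = 0 := if_neg hse
        simp [rawD, hfT, h0, hse]
    · simp [rawD, hfT]
  by_cases hee : e = e'
  · -- diagonal case
    subst hee
    have hA0 : orientedAffinity n T w e e = 0 := by
      simp [orientedAffinity]
    rw [hL]
    simp only [Matrix.sub_apply, Matrix.smul_apply, degMat, Matrix.diagonal_apply_eq,
      smul_eq_mul, hA0, sub_zero]
    set g : Finset (Fin n) → ℝ :=
      fun x => if e.1 ≠ x ∧ e.1 ∪ x ∈ T then w (e.1 ∪ x) else 0 with hg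
    have hgpos : ∀ x, e.1 ≠ x → e.1 ∪ x ∈ T → g x = w (e.1 ∪ x) := by
      intro x h1 h2; rw [hg]; exact if_pos ⟨h1, h2⟩
    have hgneg : ∀ x, ¬ (e.1 ≠ x ∧ e.1 ∪ x ∈ T) → g x = 0 := by
      intro x h1; rw [hg]; exact if_neg h1
    have habs : ∀ e'' : {x : Finset (Fin n) // x.card = 2},
        |orientedAffinity n T w e e''| = g e''.1 := by
      intro e''
      by_cases h : e ≠ e'' ∧ e.1 ∪ e''.1 ∈ T
      · have hv : e.1 ≠ e''.1 := fun hv => h.1 (Subtype.ext hv)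
        have hwp := hw _ h.2
        rw [hgpos _ hv h.2]
        simp only [orientedAffinity, if_pos h]
        split
        · rw [abs_neg, abs_of_pos hwp]
        · rw [abs_of_pos hwp]
      · have hv : ¬ (e.1 ≠ e''.1 ∧ e.1 ∪ e''.1 ∈ T) := by
          intro hc
          exact h ⟨fun hq => hc.1 (congrArg Subtype.val hq), hc.2⟩
        rw [hgneg _ hv]
        simp only [orientedAffinity, if_neg h, abs_zero]
    rw [Finset.sum_congr rfl (fun x _ => habs x),
      ← Finset.sum_subtype S2 hmem2 g]
    -- key counting identity
    have hkey : ∑ x ∈ S2, g x = ∑ f ∈ S3, (if f ∈ T ∧ e.1 ⊆ f then 2 * w f else 0) := by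
      have step1 : ∀ x ∈ S2, g x = ∑ f ∈ S3, (if f = e.1 ∪ x then g x else 0) := by
        intro x _
        rw [Finset.sum_ite_eq' S3 (e.1 ∪ x) (fun _ => g x)]
        by_cases hU : e.1 ≠ x ∧ e.1 ∪ x ∈ T
        · rw [if_pos ((hmem3 _).2 (hT _ hU.2))]
        · rw [hgneg _ hU]
          split <;> rfl
      rw [Finset.sum_congr rfl step1, Finset.sum_comm]
      refine Finset.sum_congr rfl (fun f hf => ?_)
      have hf3 : f.card = 3 := (hmem3 f).1 hf
      by_cases hc : f ∈ T ∧ e.1 ⊆ f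
      · rw [if_pos hc]
        have hterm : ∀ x ∈ S2, (if f = e.1 ∪ x then g x else 0)
            = if e.1 ∪ x = f ∧ e.1 ≠ x then w f else 0 := by
          intro x _
          by_cases hfx : f = e.1 ∪ x
          · rw [if_pos hfx]
            by_cases hxe : e.1 ≠ x
            · rw [hgpos _ hxe (hfx ▸ hc.1),
                if_pos (show e.1 ∪ x = f ∧ e.1 ≠ x from ⟨hfx.symm, hxe⟩), ← hfx]
            · rw [hgneg _ (fun hq => hxe hq.1),
                if_neg (show ¬ (e.1 ∪ x = f ∧ e.1 ≠ x) from fun hq => hxe hq.2)]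
          · rw [if_neg hfx,
              if_neg (show ¬ (e.1 ∪ x = f ∧ e.1 ≠ x) from fun hq => hfx hq.1.symm)]
        rw [Finset.sum_congr rfl hterm, ← Finset.sum_filter, Finset.sum_const,
          hS2, Finset.filter_filter, edge_count e.2 hf3 hc.2]
        rw [nsmul_eq_mul]; norm_num
      · rw [if_neg hc]
        refine Finset.sum_eq_zero (fun x _ => ?_)
        by_cases hfx : f = e.1 ∪ x
        · rw [if_pos hfx, hgneg]
          rintro ⟨_, hU⟩
          exact hc ⟨hfx ▸ hU, hfx ▸ Finset.subset_union_left⟩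
        · rw [if_neg hfx]
    rw [hkey, Finset.mul_sum]
    refine Finset.sum_congr rfl (fun f hf => ?_)
    have hf3 : f.card = 3 := (hmem3 f).1 hf
    by_cases hc : f ∈ T ∧ e.1 ⊆ f
    · have hsd : (f \ e.1).card = 1 := by
        rw [Finset.card_sdiff_of_subset hc.2, hf3, e.2]
      rw [if_pos (show f ∈ T ∧ e.1 ⊆ f ∧ e.1 ⊆ f from ⟨hc.1, hc.2, hc.2⟩), if_pos hc]
      rcases incSign_pm hc.2 hsd with hs | hs <;> rw [hs] <;> ring
    · have hc' : ¬ (f ∈ T ∧ e.1 ⊆ f ∧ e.1 ⊆ f) := fun hq => hc ⟨hq.1, hq.2.1⟩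
      rw [if_neg hc', if_neg hc, mul_zero]
  · -- off-diagonal case
    have hne : e.1 ≠ e'.1 := fun h => hee (Subtype.ext h)
    rw [hL]
    simp only [Matrix.sub_apply, Matrix.smul_apply, degMat,
      Matrix.diagonal_apply_ne _ hee, smul_eq_mul, mul_zero, zero_sub]
    have hsingle : ∀ f ∈ S3,
        (if f ∈ T ∧ e.1 ⊆ f ∧ e'.1 ⊆ f then
          w f * (incSign n f e.1 * incSign n f e'.1) else 0)
        = if f = e.1 ∪ e'.1 then
            (if f ∈ T ∧ e.1 ⊆ f ∧ e'.1 ⊆ f then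
              w f * (incSign n f e.1 * incSign n f e'.1) else 0) else 0 := by
      intro f hf
      by_cases hfu : f = e.1 ∪ e'.1
      · rw [if_pos hfu]
      · rw [if_neg hfu, if_neg]
        rintro ⟨_, hse, hse'⟩
        have hf3 : f.card = 3 := (hmem3 f).1 hf
        have hsub : e.1 ∪ e'.1 ⊆ f := Finset.union_subset hse hse'
        have hstrict : e.1 ⊂ e.1 ∪ e'.1 := by
          refine Finset.subset_union_left.ssubset_of_ne (fun hq => ?_)
          have hsb : e'.1 ⊆ e.1 := hq ▸ Finset.subset_union_right
          exact hne (Finset.eq_of_subset_of_card_le hsb (by rw [e.2, e'.2])).symm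
        have hlt : 2 < (e.1 ∪ e'.1).card := by
          have hq := Finset.card_lt_card hstrict
          rw [e.2] at hq
          exact hq
        exact hfu (Finset.eq_of_subset_of_card_le hsub (by omega)).symm
    rw [Finset.sum_congr rfl hsingle,
      Finset.sum_ite_eq' S3 (e.1 ∪ e'.1)
        (fun f => if f ∈ T ∧ e.1 ⊆ f ∧ e'.1 ⊆ f then
          w f * (incSign n f e.1 * incSign n f e'.1) else 0)]
    by_cases hU : e.1 ∪ e'.1 ∈ T
    · have hc3 : (e.1 ∪ e'.1).card = 3 := hT _ hU
      have hse : e.1 ⊆ e.1 ∪ e'.1 := Finset.subset_union_left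
      have hse' : e'.1 ⊆ e.1 ∪ e'.1 := Finset.subset_union_right
      rw [if_pos ((hmem3 _).2 hc3),
        if_pos (show e.1 ∪ e'.1 ∈ T ∧ e.1 ⊆ e.1 ∪ e'.1 ∧ e'.1 ⊆ e.1 ∪ e'.1 from
          ⟨hU, hse, hse'⟩)]
      have hsd : ((e.1 ∪ e'.1) \ e.1).card = 1 := by
        rw [Finset.card_sdiff_of_subset hse, hc3, e.2]
      have hsd' : ((e.1 ∪ e'.1) \ e'.1).card = 1 := by
        rw [Finset.card_sdiff_of_subset hse', hc3, e'.2]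
      have hrd : rawD n T (e.1 ∪ e'.1) e.1 = incSign n (e.1 ∪ e'.1) e.1 := if_pos hU
      have hrd' : rawD n T (e.1 ∪ e'.1) e'.1 = incSign n (e.1 ∪ e'.1) e'.1 := if_pos hU
      have hAval : orientedAffinity n T w e e' =
          if incSign n (e.1 ∪ e'.1) e.1 = incSign n (e.1 ∪ e'.1) e'.1 then
            -w (e.1 ∪ e'.1) else w (e.1 ∪ e'.1) := by
        simp only [orientedAffinity, if_pos (show e ≠ e' ∧ e.1 ∪ e'.1 ∈ T from ⟨hee, hU⟩),
          hrd, hrd']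
      rw [hAval]
      rcases incSign_pm hse hsd with hs | hs <;>
        rcases incSign_pm hse' hsd' with hs' | hs' <;>
        rw [hs, hs'] <;> norm_num
    · have hA0 : orientedAffinity n T w e e' = 0 := by
        simp only [orientedAffinity]
        exact if_neg (fun hq => hU hq.2)
      rw [hA0, neg_zero]
      have h0 : (if (e.1 ∪ e'.1) ∈ T ∧ e.1 ⊆ e.1 ∪ e'.1 ∧ e'.1 ⊆ e.1 ∪ e'.1 then
          w (e.1 ∪ e'.1) * (incSign n (e.1 ∪ e'.1) e.1 * incSign n (e.1 ∪ e'.1) e'.1)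
          else 0) = 0 := if_neg (fun hq => hU hq.1)
      rw [h0]
      split <;> rfl
end

section
/- With the notation of the context, suppose the graph is label-connected. Then the matrix I − P_UU is invertible (where I is the identity matrix indexed by U). -/
open Matrix

/-- If the weighted graph is label-connected, then `I − P_UU` is
invertible, where `P` is the transition matrix and `U` is the set of unlabeled
vertices. -/
theorem one_sub_Puu_isUnit (n : ℕ)
    (A : Matrix (Fin n) (Fin n) ℝ)
    (hsymm : ∀ i j, A i j = A j i)
    (hnn : ∀ i j, 0 ≤ A i j)
    (hdiag : ∀ i, A i i = 0)
    (hdeg : ∀ i, 0 < ∑ j, A i j)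
    (P : Matrix (Fin n) (Fin n) ℝ)
    (hP : ∀ i j, P i j = A i j / ∑ l, A i l)
    (Lab : Finset (Fin n))
    (hconn : ∀ u : Fin n, u ∉ Lab → ∃ (t : ℕ) (v : Fin (t + 1) → Fin n),
      v 0 = u ∧ (∀ i : Fin t, 0 < A (v i.castSucc) (v i.succ)) ∧ v (Fin.last t) ∈ Lab) :
    IsUnit (1 - P.submatrix (Subtype.val : {i : Fin n // i ∉ Lab} → Fin n)
      (Subtype.val : {i : Fin n // i ∉ Lab} → Fin n)) := by
  by_contra hunit
  set Q : Matrix {i : Fin n // i ∉ Lab} {i : Fin n // i ∉ Lab} ℝ :=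
    P.submatrix Subtype.val Subtype.val with hQdef
  rw [Matrix.isUnit_iff_isUnit_det, isUnit_iff_ne_zero, not_ne_iff] at hunit
  obtain ⟨v, hv0, hvz⟩ := (Matrix.exists_mulVec_eq_zero_iff).2 hunit
  have hfix : ∀ u : {i : Fin n // i ∉ Lab}, v u = ∑ w : {i : Fin n // i ∉ Lab}, Q u w * v w := by
    intro u
    have h := congrFun hvz u
    rw [Matrix.sub_mulVec] at h
    simp only [Pi.sub_apply, Pi.zero_apply, sub_eq_zero, Matrix.one_mulVec] at h
    exact h
  obtain ⟨w₀, hw₀⟩ : ∃ w, v w ≠ 0 := by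
    by_contra h; push_neg at h; exact hv0 (funext h)
  haveI : Nonempty {i : Fin n // i ∉ Lab} := ⟨w₀⟩
  obtain ⟨u₀, hu₀⟩ := Finite.exists_max (fun w : {i : Fin n // i ∉ Lab} => |v w|)
  have hMpos : 0 < |v u₀| := lt_of_lt_of_le (abs_pos.2 hw₀) (hu₀ w₀)
  have key : ∀ u : {i : Fin n // i ∉ Lab}, |v u| = |v u₀| → ∀ w : Fin n, 0 < A u.1 w →
      ∃ hw : w ∉ Lab, |v ⟨w, hw⟩| = |v u₀| := by
    intro u hu w hAw
    have hs : 0 < ∑ l, A u.1 l := hdeg u.1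
    have hPnn : ∀ j, 0 ≤ P u.1 j := fun j => by
      rw [hP]; exact div_nonneg (hnn _ _) hs.le
    have hrow : ∑ j, P u.1 j = 1 := by
      simp only [hP]
      rw [← Finset.sum_div, div_self hs.ne']
    have hsubty : ∑ x : {i : Fin n // i ∉ Lab}, Q u x = ∑ j ∈ Labᶜ, P u.1 j := by
      rw [Finset.sum_subtype Labᶜ (fun x => Finset.mem_compl) (fun j => P u.1 j)]
      rfl
    have hQrow : ∑ x : {i : Fin n // i ∉ Lab}, Q u x ≤ 1 := by
      rw [← hrow, hsubty]
      exact Finset.sum_le_sum_of_subset_of_nonneg (Finset.subset_univ _)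
        (fun j _ _ => hPnn j)
    have h1 : |v u₀| ≤ ∑ x : {i : Fin n // i ∉ Lab}, Q u x * |v x| := by
      rw [← hu, hfix u]
      calc |∑ x : {i : Fin n // i ∉ Lab}, Q u x * v x|
          ≤ ∑ x : {i : Fin n // i ∉ Lab}, |Q u x * v x| :=
            Finset.abs_sum_le_sum_abs _ _
        _ = ∑ x : {i : Fin n // i ∉ Lab}, Q u x * |v x| := by
            refine Finset.sum_congr rfl fun x _ => ?_
            rw [abs_mul, abs_of_nonneg (show (0:ℝ) ≤ Q u x from hPnn x.1)]
    have h2 : ∑ x : {i : Fin n // i ∉ Lab}, Q u x * |v x|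
        ≤ (∑ x : {i : Fin n // i ∉ Lab}, Q u x) * |v u₀| := by
      rw [Finset.sum_mul]
      exact Finset.sum_le_sum fun x _ => mul_le_mul_of_nonneg_left (hu₀ x) (hPnn x.1)
    have h3 : (∑ x : {i : Fin n // i ∉ Lab}, Q u x) * |v u₀| ≤ |v u₀| :=
      mul_le_of_le_one_left hMpos.le hQrow
    have hQsum1 : ∑ x : {i : Fin n // i ∉ Lab}, Q u x = 1 := by
      have heq : (∑ x : {i : Fin n // i ∉ Lab}, Q u x) * |v u₀| = 1 * |v u₀| := by
        rw [one_mul]; exact le_antisymm h3 (h1.trans h2)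
      exact mul_right_cancel₀ hMpos.ne' heq
    have hsumeq : ∑ x : {i : Fin n // i ∉ Lab}, Q u x * |v x| = |v u₀| := by
      refine le_antisymm ?_ h1
      calc _ ≤ (∑ x : {i : Fin n // i ∉ Lab}, Q u x) * |v u₀| := h2
        _ = |v u₀| := by rw [hQsum1, one_mul]
    have heach : ∀ x : {i : Fin n // i ∉ Lab}, Q u x * (|v u₀| - |v x|) = 0 := by
      have hzero : ∑ x : {i : Fin n // i ∉ Lab}, Q u x * (|v u₀| - |v x|) = 0 := by
        simp only [mul_sub]
        rw [Finset.sum_sub_distrib, ← Finset.sum_mul, hQsum1, one_mul, hsumeq, sub_self]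
      intro x
      have := (Finset.sum_eq_zero_iff_of_nonneg (fun x _ =>
        mul_nonneg (hPnn x.1) (sub_nonneg.2 (hu₀ x)))).1 hzero
      exact this x (Finset.mem_univ x)
    have hLab0 : ∀ l ∈ Lab, P u.1 l = 0 := by
      have hsum0 : ∑ l ∈ Lab, P u.1 l = 0 := by
        have := Finset.sum_compl_add_sum Lab (fun j => P u.1 j)
        rw [hrow, ← hsubty, hQsum1] at this
        linarith
      exact fun l hl => (Finset.sum_eq_zero_iff_of_nonneg (fun j _ => hPnn j)).1 hsum0 l hl
    by_cases hwLab : w ∈ Lab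
    · exfalso
      have := hLab0 w hwLab
      rw [hP] at this
      rcases div_eq_zero_iff.1 this with h | h
      · exact hAw.ne' h
      · exact hs.ne' h
    · refine ⟨hwLab, ?_⟩
      have hQpos : 0 < Q u ⟨w, hwLab⟩ := by
        show 0 < P u.1 w
        rw [hP]
        exact div_pos hAw hs
      have := heach ⟨w, hwLab⟩
      rcases mul_eq_zero.1 this with h | h
      · exact absurd h hQpos.ne'
      · linarith [abs_nonneg (v ⟨w, hwLab⟩), sub_eq_zero.1 h]
  obtain ⟨t, path, hpath0, hstep, hlast⟩ := hconn u₀.1 u₀.2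
  have hall : ∀ i : Fin (t + 1), ∃ h : path i ∉ Lab, |v ⟨path i, h⟩| = |v u₀| := by
    intro i
    induction i using Fin.induction with
    | zero =>
      have h0 : path 0 ∉ Lab := hpath0 ▸ u₀.2
      refine ⟨h0, ?_⟩
      have he : (⟨path 0, h0⟩ : {i : Fin n // i ∉ Lab}) = u₀ := Subtype.ext hpath0
      rw [he]
    | succ i ih =>
      obtain ⟨h, hv⟩ := ih
      obtain ⟨hw, hvw⟩ := key ⟨path i.castSucc, h⟩ hv (path i.succ) (hstep i)
      exact ⟨hw, hvw⟩
  obtain ⟨h, _⟩ := hall (Fin.last t)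
  exact h hlast
end

section
/- With the notation of the context, suppose the graph is label-connected, and let y_l : Fin n → ℝ be a vector of given labels. Define the sequence y : ℕ → (Fin n → ℝ) by: y 0 i = y_l i for i ∈ Lab and y 0 i = 0 for i ∈ U; and y (t+1) i = y_l i for i ∈ Lab, while y (t+1) i = ∑_j P i j · y t j for i ∈ U. Then the sequence y t converges as t → ∞ to the vector ŷ determined by: ŷ i = y_l i for i ∈ Lab, and the restriction of ŷ to U is the unique solution z (indexed by U) of (I − P_UU) z = b, where b u = ∑_{j ∈ Lab} P u j · y_l j for u ∈ U. -/
/-!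
Write `Q = P_UU`. It is nonnegative with row sums `1 - ∑_{j ∈ Lab} P u j ≤ 1`, so the row-sum
vectors `Q ^ k *ᵥ 1` decrease in `k`; along a path from `u` into `Lab`, mass leaks out through the
last edge, so `(Q ^ k *ᵥ 1) u < 1` for some `k`. Hence some power `Q ^ N` has all row sums `< 1`,
i.e. `‖Q ^ N‖ < 1` in the `ℓ∞` operator norm, while `‖Q‖ ≤ 1`; therefore `Q ^ t → 0`. This makes
`1 - Q` injective (a fixed vector of `Q` is fixed by every `Q ^ t`), hence invertible, and the
error of the iteration `x (t + 1) = Q *ᵥ x t + b` is `Q ^ t *ᵥ (x 0 - z) → 0`.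
-/

open Matrix Filter Topology

theorem Finset.sum_eq_sum_add_sum_subtype_notMem {ι M : Type*} [Fintype ι] [DecidableEq ι]
    [AddCommMonoid M] (s : Finset ι) (f : ι → M) :
    ∑ j, f j = ∑ j ∈ s, f j + ∑ u : {i // i ∉ s}, f u := by
  rw [← Finset.sum_add_sum_compl s f, Finset.sum_subtype sᶜ (p := (· ∉ s)) (by simp)]

theorem tendsto_norm_pow_atTop_nhds_zero_of_norm_pow_lt_one {R : Type*} [SeminormedRing R]
    {a : R} (ha : ‖a‖ ≤ 1) {N : ℕ} (hN : 0 < N) (haN : ‖a ^ N‖ < 1) :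
    Tendsto (fun t => ‖a ^ t‖) atTop (𝓝 0) := by
  have hanti : Antitone fun t => ‖a ^ t‖ := antitone_nat_of_succ_le fun t =>
    calc ‖a ^ (t + 1)‖ ≤ ‖a ^ t‖ * ‖a‖ := by rw [pow_succ]; exact norm_mul_le _ _
      _ ≤ ‖a ^ t‖ := mul_le_of_le_one_right (norm_nonneg _) ha
  have hbound : ∀ t ≥ N, ‖a ^ t‖ ≤ ‖a ^ N‖ ^ (t / N) := fun t ht =>
    calc ‖a ^ t‖ ≤ ‖a ^ (N * (t / N))‖ := hanti (Nat.mul_div_le t N)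
      _ ≤ ‖a ^ N‖ ^ (t / N) := by rw [pow_mul]; exact norm_pow_le' _ (Nat.div_pos ht hN)
  refine squeeze_zero' (Eventually.of_forall fun t => norm_nonneg _)
    (eventually_atTop.2 ⟨N, hbound⟩) ?_
  exact (tendsto_pow_atTop_nhds_zero_of_lt_one (norm_nonneg _) haN).comp
    (Nat.tendsto_div_const_atTop hN.ne')

namespace Matrix

variable {ι : Type*} [Fintype ι]

theorem mulVec_one_apply {m R : Type*} [NonAssocSemiring R] (M : Matrix m ι R) (u : m) :
    (M *ᵥ 1) u = ∑ v, M u v := by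
  simp [mulVec, dotProduct]

theorem coe_sum_nnnorm_eq_mulVec_one {M : Matrix ι ι ℝ} (hM : ∀ u v, 0 ≤ M u v) (u : ι) :
    ((∑ v, ‖M u v‖₊ : NNReal) : ℝ) = (M *ᵥ 1) u := by
  simp [mulVec_one_apply, Real.norm_of_nonneg (hM u _)]

variable [DecidableEq ι]

theorem pow_mulVec_eq_self_of_mulVec_eq_self {R : Type*} [CommSemiring R] {Q : Matrix ι ι R}
    {w : ι → R} (hw : Q *ᵥ w = w) (t : ℕ) : Q ^ t *ᵥ w = w := by
  induction t with
  | zero => rw [pow_zero, one_mulVec]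
  | succ t ih => rw [pow_succ, ← mulVec_mulVec, hw, ih]

theorem isUnit_one_sub_of_tendsto_pow_mulVec {K : Type*} [Field K] [TopologicalSpace K]
    [T2Space K] {Q : Matrix ι ι K} (hQ : ∀ w, Tendsto (fun t => Q ^ t *ᵥ w) atTop (𝓝 0)) :
    IsUnit (1 - Q) := by
  refine mulVec_injective_iff_isUnit.1 fun a b hab => ?_
  have hfix : Q *ᵥ (a - b) = a - b := by
    rw [mulVec_sub, eq_comm, ← sub_eq_zero, ← sub_eq_zero.2 hab, sub_mulVec, one_mulVec,
      sub_mulVec, one_mulVec]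
    abel
  have hlim := hQ (a - b)
  simp only [pow_mulVec_eq_self_of_mulVec_eq_self hfix] at hlim
  exact sub_eq_zero.1 (tendsto_nhds_unique tendsto_const_nhds hlim)

theorem tendsto_of_eq_mulVec_add {R : Type*} [CommRing R] [TopologicalSpace R] [ContinuousAdd R]
    {Q : Matrix ι ι R} (hQ : ∀ w, Tendsto (fun t => Q ^ t *ᵥ w) atTop (𝓝 0)) {b z : ι → R}
    (hz : (1 - Q) *ᵥ z = b) {x : ℕ → ι → R} (hx : ∀ t, x (t + 1) = Q *ᵥ x t + b) :
    Tendsto x atTop (𝓝 z) := by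
  have herr : ∀ t, x t - z = Q ^ t *ᵥ (x 0 - z) := by
    intro t
    induction t with
    | zero => rw [pow_zero, one_mulVec]
    | succ t ih =>
      rw [pow_succ', ← mulVec_mulVec, ← ih, hx, ← hz, mulVec_sub, sub_mulVec, one_mulVec]
      abel
  have hlim := (hQ (x 0 - z)).const_add z
  simp only [← herr, add_sub_cancel, add_zero] at hlim
  exact hlim

section Substochastic

variable {Q : Matrix ι ι ℝ}

theorem antitone_pow_mulVec_one (hQ0 : ∀ u v, 0 ≤ Q u v) (hQ1 : Q *ᵥ 1 ≤ 1) :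
    Antitone fun k => Q ^ k *ᵥ 1 := by
  refine antitone_nat_of_succ_le fun k u => ?_
  rw [pow_succ, ← mulVec_mulVec]
  exact Finset.sum_le_sum fun v _ =>
    (mul_le_mul_of_nonneg_left (hQ1 v) (pow_apply_nonneg hQ0 k u v)).trans_eq (by simp)

theorem pow_mulVec_one_le_one (hQ0 : ∀ u v, 0 ≤ Q u v) (hQ1 : Q *ᵥ 1 ≤ 1) (k : ℕ) :
    Q ^ k *ᵥ 1 ≤ 1 :=
  (antitone_pow_mulVec_one hQ0 hQ1 (Nat.zero_le k)).trans_eq (by simp)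

theorem pow_succ_mulVec_one_lt_one (hQ0 : ∀ u v, 0 ≤ Q u v) (hQ1 : Q *ᵥ 1 ≤ 1) {u v : ι}
    (huv : 0 < Q u v) {k : ℕ} (hv : (Q ^ k *ᵥ 1) v < 1) : (Q ^ (k + 1) *ᵥ 1) u < 1 :=
  calc (Q ^ (k + 1) *ᵥ 1) u = ∑ w, Q u w * (Q ^ k *ᵥ 1) w := by
        rw [pow_succ', ← mulVec_mulVec]; rfl
    _ < ∑ w, Q u w * 1 :=
        Finset.sum_lt_sum (fun w _ => mul_le_mul_of_nonneg_left
          (pow_mulVec_one_le_one hQ0 hQ1 k w) (hQ0 u w))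
          ⟨v, Finset.mem_univ v, mul_lt_mul_of_pos_left hv huv⟩
    _ ≤ 1 := by simpa only [mulVec_one_apply, mul_one, Pi.one_apply] using hQ1 u

attribute [local instance] Matrix.linftyOpNormedRing

theorem linfty_opNorm_le_one_of_nonneg {M : Matrix ι ι ℝ} (hM : ∀ u v, 0 ≤ M u v)
    (h : M *ᵥ 1 ≤ 1) : ‖M‖ ≤ 1 := by
  rw [linfty_opNorm_def, NNReal.coe_le_one, Finset.sup_le_iff]
  intro u _
  rw [← NNReal.coe_le_one, coe_sum_nnnorm_eq_mulVec_one hM]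
  exact h u

theorem linfty_opNorm_lt_one_of_nonneg {M : Matrix ι ι ℝ} (hM : ∀ u v, 0 ≤ M u v)
    (h : ∀ u, (M *ᵥ 1) u < 1) : ‖M‖ < 1 := by
  rw [linfty_opNorm_def, NNReal.coe_lt_one, Finset.sup_lt_iff zero_lt_one]
  intro u _
  rw [← NNReal.coe_lt_one, coe_sum_nnnorm_eq_mulVec_one hM]
  exact h u

theorem exists_linfty_opNorm_pow_lt_one (hQ0 : ∀ u v, 0 ≤ Q u v) (hQ1 : Q *ᵥ 1 ≤ 1)
    (hleak : ∀ u, ∃ k, (Q ^ k *ᵥ 1) u < 1) : ∃ N, 0 < N ∧ ‖Q ^ N‖ < 1 := by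
  choose k hk using hleak
  refine ⟨Finset.univ.sup k + 1, Nat.succ_pos _,
    linfty_opNorm_lt_one_of_nonneg (pow_apply_nonneg hQ0 _) fun u => ?_⟩
  exact (antitone_pow_mulVec_one hQ0 hQ1
    ((Finset.le_sup (Finset.mem_univ u)).trans (Nat.le_succ _)) u).trans_lt (hk u)

theorem tendsto_pow_mulVec_atTop_nhds_zero (hQ0 : ∀ u v, 0 ≤ Q u v) (hQ1 : Q *ᵥ 1 ≤ 1)
    (hleak : ∀ u, ∃ k, (Q ^ k *ᵥ 1) u < 1) (w : ι → ℝ) :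
    Tendsto (fun t => Q ^ t *ᵥ w) atTop (𝓝 0) := by
  obtain ⟨N, hN, hQN⟩ := exists_linfty_opNorm_pow_lt_one hQ0 hQ1 hleak
  have hpow := tendsto_norm_pow_atTop_nhds_zero_of_norm_pow_lt_one
    (linfty_opNorm_le_one_of_nonneg hQ0 hQ1) hN hQN
  refine squeeze_zero_norm (fun t => linfty_opNorm_mulVec _ w) ?_
  simpa using hpow.mul_const ‖w‖

end Substochastic

section LabelPropagation

variable {Lab : Finset ι} {P : Matrix ι ι ℝ}

abbrev unlabeledBlock (P : Matrix ι ι ℝ) (Lab : Finset ι) :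
    Matrix {i // i ∉ Lab} {i // i ∉ Lab} ℝ :=
  P.submatrix Subtype.val Subtype.val

theorem unlabeledBlock_mulVec_one_apply (hP1 : ∀ i, ∑ j, P i j = 1) (u : {i // i ∉ Lab}) :
    (unlabeledBlock P Lab *ᵥ 1) u = 1 - ∑ j ∈ Lab, P u j := by
  rw [mulVec_one_apply, ← hP1 u, Finset.sum_eq_sum_add_sum_subtype_notMem Lab]
  simp

theorem unlabeledBlock_mulVec_one_le_one (hP0 : ∀ i j, 0 ≤ P i j)
    (hP1 : ∀ i, ∑ j, P i j = 1) : unlabeledBlock P Lab *ᵥ 1 ≤ 1 := fun u => by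
  rw [unlabeledBlock_mulVec_one_apply hP1, Pi.one_apply, sub_le_self_iff]
  exact Finset.sum_nonneg fun j _ => hP0 u j

theorem exists_unlabeledBlock_pow_mulVec_one_lt_one (hP0 : ∀ i j, 0 ≤ P i j)
    (hP1 : ∀ i, ∑ j, P i j = 1) (t : ℕ) (v : Fin (t + 1) → ι)
    (hv : ∀ i : Fin t, 0 < P (v i.castSucc) (v i.succ)) (hvLab : v (Fin.last t) ∈ Lab)
    (u : {i // i ∉ Lab}) (hu : v 0 = u) :
    ∃ k, (unlabeledBlock P Lab ^ k *ᵥ 1) u < 1 := by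
  induction t generalizing u with
  | zero => exact absurd (hu ▸ hvLab) u.2
  | succ t ih =>
    have hstep : 0 < P u (v 1) := hu ▸ hv 0
    by_cases h1 : v 1 ∈ Lab
    · refine ⟨1, ?_⟩
      rw [pow_one, unlabeledBlock_mulVec_one_apply hP1]
      linarith [Finset.single_le_sum (fun j _ => hP0 u j) h1]
    · obtain ⟨k, hk⟩ := ih (v ∘ Fin.succ) (fun i => hv i.succ) hvLab ⟨v 1, h1⟩ rfl
      exact ⟨k + 1, pow_succ_mulVec_one_lt_one (fun _ _ => hP0 _ _)
        (unlabeledBlock_mulVec_one_le_one hP0 hP1) hstep hk⟩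

theorem sum_mul_eq_unlabeledBlock_mulVec_add {x yl : ι → ℝ} (hx : ∀ j ∈ Lab, x j = yl j) :
    (fun u : {i // i ∉ Lab} => ∑ j, P u j * x j) =
      unlabeledBlock P Lab *ᵥ (fun u => x u) +
        fun u : {i // i ∉ Lab} => ∑ j ∈ Lab, P u j * yl j := by
  funext u
  rw [Finset.sum_eq_sum_add_sum_subtype_notMem Lab, add_comm,
    Finset.sum_congr (s₁ := Lab) rfl fun j hj => by rw [hx j hj]]
  rfl

end LabelPropagation

end Matrix

theorem label_propagation_converges_general (n : ℕ)
    (A : Matrix (Fin n) (Fin n) ℝ)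
    (hnn : ∀ i j, 0 ≤ A i j)
    (hdeg : ∀ i, 0 < ∑ j, A i j)
    (P : Matrix (Fin n) (Fin n) ℝ)
    (hP : ∀ i j, P i j = A i j / ∑ l, A i l)
    (Lab : Finset (Fin n))
    (hconn : ∀ u : Fin n, u ∉ Lab → ∃ (t : ℕ) (v : Fin (t + 1) → Fin n),
      v 0 = u ∧ (∀ i : Fin t, 0 < A (v i.castSucc) (v i.succ)) ∧ v (Fin.last t) ∈ Lab)
    (yl : Fin n → ℝ)
    (y : ℕ → Fin n → ℝ)
    (hy0 : ∀ i, y 0 i = if i ∈ Lab then yl i else 0)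
    (hys : ∀ t i, y (t + 1) i = if i ∈ Lab then yl i else ∑ j, P i j * y t j) :
    ∃ z : {i : Fin n // i ∉ Lab} → ℝ,
      ((1 - P.submatrix (Subtype.val : {i : Fin n // i ∉ Lab} → Fin n)
          Subtype.val).mulVec z = fun u => ∑ j ∈ Lab, P u.1 j * yl j) ∧
      (∀ z' : {i : Fin n // i ∉ Lab} → ℝ,
        ((1 - P.submatrix (Subtype.val : {i : Fin n // i ∉ Lab} → Fin n)
            Subtype.val).mulVec z' = fun u => ∑ j ∈ Lab, P u.1 j * yl j) → z' = z) ∧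
      Filter.Tendsto y Filter.atTop
        (nhds fun i => if h : i ∈ Lab then yl i else z ⟨i, h⟩) := by
  have hP0 : ∀ i j, 0 ≤ P i j := fun i j => hP i j ▸ div_nonneg (hnn i j) (hdeg i).le
  have hP1 : ∀ i, ∑ j, P i j = 1 := fun i => by
    simp only [hP, ← Finset.sum_div, div_self (hdeg i).ne']
  have hleak : ∀ u, ∃ k, (unlabeledBlock P Lab ^ k *ᵥ 1) u < 1 := fun u => by
    obtain ⟨t, v, hv0, hvA, hvLab⟩ := hconn u u.2
    exact exists_unlabeledBlock_pow_mulVec_one_lt_one hP0 hP1 t v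
      (fun i => hP _ _ ▸ div_pos (hvA i) (hdeg _)) hvLab u hv0
  have hpow := tendsto_pow_mulVec_atTop_nhds_zero (fun _ _ => hP0 _ _)
    (unlabeledBlock_mulVec_one_le_one hP0 hP1) hleak
  have hunit := isUnit_one_sub_of_tendsto_pow_mulVec hpow
  obtain ⟨z, hz⟩ := mulVec_surjective_iff_isUnit.2 hunit fun u => ∑ j ∈ Lab, P u.1 j * yl j
  refine ⟨z, hz, fun z' hz' => mulVec_injective_iff_isUnit.2 hunit (hz'.trans hz.symm), ?_⟩
  have hyLab : ∀ t, ∀ j ∈ Lab, y t j = yl j := by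
    rintro (_ | t) j hj <;> simp [hy0, hys, hj]
  have hyU : Tendsto (fun t (u : {i // i ∉ Lab}) => y t u) atTop (𝓝 z) :=
    tendsto_of_eq_mulVec_add hpow hz fun t =>
      (funext fun u => by simp [hys, u.2]).trans
        (sum_mul_eq_unlabeledBlock_mulVec_add (hyLab t))
  refine tendsto_pi_nhds.2 fun i => ?_
  by_cases hi : i ∈ Lab
  · simp [hi, hyLab _ i hi]
  · simpa [hi] using tendsto_pi_nhds.1 hyU ⟨i, hi⟩

/-- For a label-connected weighted graph, the iterative label
propagation sequence converges to the vector which agrees with the given labels on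
`Lab` and whose restriction to the unlabeled vertices `U` is the unique solution of
`(I − P_UU) z = b`, where `b u = ∑_{j ∈ Lab} P u j · y_l j`. -/
theorem label_propagation_converges (n : ℕ)
    (A : Matrix (Fin n) (Fin n) ℝ)
    (hsymm : ∀ i j, A i j = A j i)
    (hnn : ∀ i j, 0 ≤ A i j)
    (hdiag : ∀ i, A i i = 0)
    (hdeg : ∀ i, 0 < ∑ j, A i j)
    (P : Matrix (Fin n) (Fin n) ℝ)
    (hP : ∀ i j, P i j = A i j / ∑ l, A i l)
    (Lab : Finset (Fin n))
    (hconn : ∀ u : Fin n, u ∉ Lab → ∃ (t : ℕ) (v : Fin (t + 1) → Fin n),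
      v 0 = u ∧ (∀ i : Fin t, 0 < A (v i.castSucc) (v i.succ)) ∧ v (Fin.last t) ∈ Lab)
    (yl : Fin n → ℝ)
    (y : ℕ → Fin n → ℝ)
    (hy0 : ∀ i, y 0 i = if i ∈ Lab then yl i else 0)
    (hys : ∀ t i, y (t + 1) i = if i ∈ Lab then yl i else ∑ j, P i j * y t j) :
    ∃ z : {i : Fin n // i ∉ Lab} → ℝ,
      ((1 - P.submatrix (Subtype.val : {i : Fin n // i ∉ Lab} → Fin n)
          Subtype.val).mulVec z = fun u => ∑ j ∈ Lab, P u.1 j * yl j) ∧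
      (∀ z' : {i : Fin n // i ∉ Lab} → ℝ,
        ((1 - P.submatrix (Subtype.val : {i : Fin n // i ∉ Lab} → Fin n)
            Subtype.val).mulVec z' = fun u => ∑ j ∈ Lab, P u.1 j * yl j) → z' = z) ∧
      Filter.Tendsto y Filter.atTop
        (nhds fun i => if h : i ∈ Lab then yl i else z ⟨i, h⟩) :=
  label_propagation_converges_general n A hnn hdeg P hP Lab hconn yl y hy0 hys
end
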